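/- Let K be a field of characteristic ≠ 2, 3, let A be a finite-dimensional commutative K-algebra (a K-vector space with K-bilinear multiplication satisfying xy = yx, not assumed associative or unital), and let B be an anticommutative K-algebra (ab = −ba). Let Br : (A ⊗_K B) × (A ⊗_K B) → A ⊗_K B be the unique K-bilinear map with Br(x ⊗ a, y ⊗ b) = xy ⊗ ab − yx ⊗ ba for all x, y ∈ A and a, b ∈ B. Then a K-linear map Φ : A ⊗ B → A ⊗ B satisfies Br(Br(u,v), Φ(w)) + Br(Br(w,u), Φ(v)) + Br(Br(v,w), Φ(u)) = 0 for all u, v, w ∈ A ⊗ B if and only if Φ lies in the K-linear span of the maps α ⊗ β (the tensor product of linear maps α : A → A and β : B → B) where either (i) α is Hom-Lie on A and β is Hom-cyclic on B, or (ii) α is Hom-2-nilpotent on A and β is arbitrary, or (iii) α is Hom-cyclic on A and β is Hom-Lie on B, or (iv) α is arbitrary and β is Hom-2-nilpotent on B. -/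

import Mathlib

open TensorProduct

/-- Hom-Lie structure on a (nonassociative) algebra. -/
def IsHomLie {K A : Type*} [Field K] [NonUnitalNonAssocRing A] [Module K A]
    (α : A →ₗ[K] A) : Prop :=
  ∀ x y z : A, (x * y) * α z + (z * x) * α y + (y * z) * α x = 0

/-- Hom-cyclic structure on a (nonassociative) algebra. -/
def IsHomCyclic {K A : Type*} [Field K] [NonUnitalNonAssocRing A] [Module K A]
    (α : A →ₗ[K] A) : Prop :=
  ∀ x y z : A, (x * y) * α z = (z * x) * α y

/-- Hom-2-nilpotent structure on a (nonassociative) algebra. -/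
def IsHom2Nilpotent {K A : Type*} [Field K] [NonUnitalNonAssocRing A] [Module K A]
    (α : A →ₗ[K] A) : Prop :=
  ∀ x y z : A, (x * y) * α z = 0

/-!
Writing `Φ = ∑ᵢ αᵢ ⊗ βᵢ`, the bracket of pure tensors is `Br (x ⊗ a) (y ⊗ b) = 2 • (x y ⊗ a b)`,
so the Hom-Jacobi identity for `Φ` says that the tensor `∑ᵢ ∑_cyc (x y) αᵢ(z) ⊗ (a b) βᵢ(c)`
vanishes for all `x, y, z, a, b, c`. Summing this over the cyclic rotations of `(x, y, z)`, and
subtracting its value at `(x, z, y)`, gives `∑ᵢ L(αᵢ) ⊗ L(βᵢ) = 0` and `∑ᵢ C(αᵢ) ⊗ C(βᵢ) = 0`,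
where `L` and `C` are linear maps whose kernels consist of the Hom-Lie and the Hom-cyclic maps.
Expanding `Φ` along a basis of `End A` adapted to both kernels, linear independence forces `βᵢ`
to be Hom-Lie whenever the basis vector `αᵢ` is not, and Hom-cyclic whenever `αᵢ` is not.
A map that is both Hom-Lie and Hom-cyclic is Hom-2-nilpotent because `3 ≠ 0`.
-/

section Separation

variable {K V W : Type*} [Field K] [AddCommGroup V] [Module K V] [AddCommGroup W] [Module K W]

theorem eq_zero_of_sum_tmul_eq_zero {ι X Y : Type*} [Fintype ι] {P : ι → X → V}
    (hP : LinearIndependent K P) {Q : ι → Y → W}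
    (h : ∀ x y, ∑ i, P i x ⊗ₜ[K] Q i y = 0) (i : ι) : Q i = 0 := by
  ext y
  rw [Pi.zero_apply, ← Module.forall_dual_apply_eq_zero_iff K]
  intro φ
  have hφ : ∑ j, φ (Q j y) • P j = 0 := by
    ext x
    simpa [Finset.sum_apply] using
      congrArg ((TensorProduct.rid K V).toLinearMap ∘ₗ LinearMap.lTensor V φ) (h x y)
  exact Fintype.linearIndependent_iff.1 hP _ hφ i

theorem LinearIndependent.map_compl_of_ker_eq_span {E : Type*} [AddCommGroup E] [Module K E]
    {ι : Type*} {e : ι → E} (he : LinearIndependent K e) {s : Set ι} {L : E →ₗ[K] V}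
    (hL : LinearMap.ker L = Submodule.span K (e '' s)) :
    LinearIndependent K fun i : ↥sᶜ => L (e i) := by
  refine (he.comp _ Subtype.val_injective).map ?_
  rw [hL, Set.range_comp, Subtype.range_coe]
  exact he.disjoint_span_image disjoint_compl_left

theorem eq_zero_of_sum_tmul_eq_zero_of_ker_eq {ι X Y E : Type*} [Fintype ι] [AddCommGroup E]
    [Module K E] {e : ι → E} (he : LinearIndependent K e) {s : Set ι} {L : E →ₗ[K] X → V}
    (hL : LinearMap.ker L = Submodule.span K (e '' s)) {Q : ι → Y → W}
    (h : ∀ x y, ∑ i, L (e i) x ⊗ₜ[K] Q i y = 0) {i : ι} (hi : i ∉ s) : Q i = 0 := by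
  classical
  have hs (j : ι) (hj : j ∈ s) : L (e j) = 0 :=
    LinearMap.mem_ker.1 (hL ▸ Submodule.subset_span (Set.mem_image_of_mem e hj))
  have hli := he.map_compl_of_ker_eq_span hL
  refine eq_zero_of_sum_tmul_eq_zero hli (Q := fun j : ↥sᶜ => Q j) (fun x y => ?_) ⟨i, hi⟩
  rw [← h x y, ← Fintype.sum_subtype_add_sum_subtype (· ∈ s)]
  simp only [hs _ (Subtype.prop _), Pi.zero_apply, zero_tmul, Finset.sum_const_zero, zero_add]
  rfl

end Separation

universe u

section AdaptedBasis

variable {K : Type*} {V : Type u} [Field K] [AddCommGroup V] [Module K V]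

theorem LinearIndepOn.disjoint_span_of_subset {b s t : Set V} (hb : LinearIndepOn K id b)
    (hs : s ⊆ b) (ht : t ⊆ b) (hst : Disjoint s t) :
    Disjoint (Submodule.span K s) (Submodule.span K t) := by
  simpa using ((linearIndepOn_union_iff hst).1 (hb.mono (Set.union_subset hs ht))).2.2

theorem exists_linearIndepOn_span_eq_of_two (U₁ U₂ : Submodule K V) :
    ∃ B s₁ s₂ : Set V, LinearIndepOn K id B ∧ s₁ ⊆ B ∧ s₂ ⊆ B ∧
      Submodule.span K s₁ = U₁ ∧ Submodule.span K s₂ = U₂ := by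
  obtain ⟨b₀, hb₀U, hb₀span, hb₀⟩ := exists_linearIndependent K ((U₁ ⊓ U₂ : Submodule K V) : Set V)
  rw [Submodule.span_eq] at hb₀span
  have extend (U : Submodule K V) (hU : U₁ ⊓ U₂ ≤ U) :
      ∃ b, b₀ ⊆ b ∧ LinearIndepOn K id b ∧ Submodule.span K b = U := by
    obtain ⟨b, hbU, hb₀b, hUb, hb⟩ := exists_linearIndepOn_id_extension hb₀
      (hb₀U.trans (SetLike.coe_subset_coe.2 hU))
    exact ⟨b, hb₀b, hb, le_antisymm (Submodule.span_le.2 hbU) (by simpa using hUb)⟩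
  obtain ⟨b₁, hb₀b₁, hb₁, hb₁span⟩ := extend U₁ inf_le_left
  obtain ⟨b₂, hb₀b₂, hb₂, hb₂span⟩ := extend U₂ inf_le_right
  -- Only the part of `b₂` outside `U₁ ⊓ U₂` is new, and it meets `U₁` trivially.
  have hdisj : Disjoint (Submodule.span K b₁) (Submodule.span K (b₂ \ b₀)) := by
    rw [Submodule.disjoint_def]
    intro v hv₁ hv₂
    have hv₀ : v ∈ Submodule.span K b₀ := by
      rw [hb₀span]
      exact ⟨hb₁span ▸ hv₁, hb₂span ▸ Submodule.span_mono Set.sdiff_subset hv₂⟩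
    exact Submodule.disjoint_def.1 (hb₂.disjoint_span_of_subset hb₀b₂ Set.sdiff_subset
      Set.disjoint_sdiff_right) v hv₀ hv₂
  refine ⟨b₁ ∪ (b₂ \ b₀), b₁, b₂, hb₁.id_union (hb₂.mono Set.sdiff_subset) hdisj,
    Set.subset_union_left, fun v hv => ?_, hb₁span, hb₂span⟩
  by_cases hv₀ : v ∈ b₀
  · exact Or.inl (hb₀b₁ hv₀)
  · exact Or.inr ⟨hv, hv₀⟩

theorem exists_basis_span_image_eq_of_two (U₁ U₂ : Submodule K V) :
    ∃ (ι : Type u) (b : Module.Basis ι K V) (s₁ s₂ : Set ι),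
      Submodule.span K (b '' s₁) = U₁ ∧ Submodule.span K (b '' s₂) = U₂ := by
  obtain ⟨B, s₁, s₂, hB, hs₁, hs₂, h₁, h₂⟩ := exists_linearIndepOn_span_eq_of_two U₁ U₂
  let b := Module.Basis.extend hB
  have hBb : B ⊆ hB.extend (Set.subset_univ B) := hB.subset_extend _
  refine ⟨_, b, Subtype.val ⁻¹' s₁, Subtype.val ⁻¹' s₂, ?_, ?_⟩
  · rwa [Module.Basis.coe_extend, Subtype.image_preimage_coe, Set.inter_eq_right.2 (hs₁.trans hBb)]
  · rwa [Module.Basis.coe_extend, Subtype.image_preimage_coe, Set.inter_eq_right.2 (hs₂.trans hBb)]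

end AdaptedBasis

section HomLieTensor

variable {K A B : Type*} [Field K] [NonUnitalNonAssocRing A] [Module K A]
  [NonUnitalNonAssocRing B] [Module K B]

theorem IsHomLie.isHom2Nilpotent {α : A →ₗ[K] A} (h3 : (3 : K) ≠ 0) (hl : IsHomLie α)
    (hc : IsHomCyclic α) : IsHom2Nilpotent α := by
  intro x y z
  have h : (3 : K) • (x * y * α z) = 0 := by
    linear_combination (norm := module) hl x y z + hc x y z - hc y z x
  exact (smul_eq_zero.1 h).resolve_left h3

def homLieTensor (α : A →ₗ[K] A) (β : B →ₗ[K] B) : A × A × A → B × B × B → A ⊗[K] B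
  | (x, y, z), (a, b, c) =>
    (x * y * α z) ⊗ₜ (a * b * β c) + (z * x * α y) ⊗ₜ (c * a * β b) +
      (y * z * α x) ⊗ₜ (b * c * β a)

def IsHomLiePair (α : A →ₗ[K] A) (β : B →ₗ[K] B) : Prop :=
  (IsHomLie α ∧ IsHomCyclic β) ∨ IsHom2Nilpotent α ∨ (IsHomCyclic α ∧ IsHomLie β) ∨
    IsHom2Nilpotent β

theorem IsHomLiePair.homLieTensor_eq_zero {α : A →ₗ[K] A} {β : B →ₗ[K] B}
    (h : IsHomLiePair α β) (p : A × A × A) (q : B × B × B) : homLieTensor α β p q = 0 := by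
  obtain ⟨x, y, z⟩ := p
  obtain ⟨a, b, c⟩ := q
  rcases h with ⟨hα, hβ⟩ | hα | ⟨hα, hβ⟩ | hβ
  · rw [homLieTensor, hβ c a b, hβ b c a, ← add_tmul, ← add_tmul, hα x y z, zero_tmul]
  · simp [homLieTensor, hα x y z, hα z x y, hα y z x]
  · rw [homLieTensor, hα z x y, hα y z x, ← tmul_add, ← tmul_add, hβ a b c, tmul_zero]
  · simp [homLieTensor, hβ a b c, hβ c a b, hβ b c a]

end HomLieTensor

section HomForms

variable (K A : Type*) {B : Type*} [Field K] [NonUnitalNonAssocRing A] [Module K A]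
  [SMulCommClass K A A] [NonUnitalNonAssocRing B] [Module K B] [SMulCommClass K B B]

def homLieForm : (A →ₗ[K] A) →ₗ[K] (A × A × A → A) where
  toFun α := fun (x, y, z) => x * y * α z + z * x * α y + y * z * α x
  map_add' α β := by ext ⟨x, y, z⟩; simp only [LinearMap.add_apply, mul_add, Pi.add_apply]; abel
  map_smul' c α := by ext ⟨x, y, z⟩; simp [mul_smul_comm, smul_add]

def homCyclicForm : (A →ₗ[K] A) →ₗ[K] (A × A × A → A) where
  toFun α := fun (x, y, z) => x * y * α z - z * x * α y
  map_add' α β := by ext ⟨x, y, z⟩; simp only [LinearMap.add_apply, mul_add, Pi.add_apply]; abel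
  map_smul' c α := by ext ⟨x, y, z⟩; simp [mul_smul_comm, smul_sub]

variable {K A}

@[simp]
theorem homLieForm_apply (α : A →ₗ[K] A) (x y z : A) :
    homLieForm K A α (x, y, z) = x * y * α z + z * x * α y + y * z * α x := rfl

@[simp]
theorem homCyclicForm_apply (α : A →ₗ[K] A) (x y z : A) :
    homCyclicForm K A α (x, y, z) = x * y * α z - z * x * α y := rfl

theorem mem_ker_homLieForm {α : A →ₗ[K] A} : α ∈ LinearMap.ker (homLieForm K A) ↔ IsHomLie α := by
  simp [funext_iff, IsHomLie]

theorem mem_ker_homCyclicForm {α : A →ₗ[K] A} :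
    α ∈ LinearMap.ker (homCyclicForm K A) ↔ IsHomCyclic α := by
  simp [funext_iff, IsHomCyclic, sub_eq_zero]

theorem homLieForm_tmul_homLieForm (α : A →ₗ[K] A) (β : B →ₗ[K] B) (x y z : A) (a b c : B) :
    homLieForm K A α (x, y, z) ⊗ₜ homLieForm K B β (a, b, c) =
      homLieTensor α β (x, y, z) (a, b, c) + homLieTensor α β (z, x, y) (a, b, c) +
        homLieTensor α β (y, z, x) (a, b, c) := by
  simp only [homLieForm_apply, homLieTensor, add_tmul, tmul_add]
  abel

theorem homCyclicForm_tmul_homCyclicForm (hcomm : ∀ x y : A, x * y = y * x)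
    (α : A →ₗ[K] A) (β : B →ₗ[K] B) (x y z : A) (a b c : B) :
    homCyclicForm K A α (x, y, z) ⊗ₜ homCyclicForm K B β (a, b, c) =
      homLieTensor α β (x, y, z) (a, b, c) - homLieTensor α β (x, z, y) (a, b, c) := by
  simp only [homCyclicForm_apply, homLieTensor, sub_tmul, tmul_sub, hcomm x z, hcomm y x,
    hcomm z y]
  abel

end HomForms

section MapDecomposition

variable {K A B A' B' : Type*} [Field K] [AddCommGroup A] [Module K A] [AddCommGroup B]
  [Module K B] [AddCommGroup A'] [Module K A'] [AddCommGroup B'] [Module K B']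

theorem TensorProduct.span_range_map_eq_top [Module.Finite K A] [Module.Finite K A'] :
    Submodule.span K (Set.range fun p : (A →ₗ[K] A') × (B →ₗ[K] B') => map p.1 p.2) = ⊤ := by
  rw [eq_top_iff]
  intro Φ _
  let b := Module.finBasis K A
  let b' := Module.finBasis K A'
  let coeff (i : Fin (Module.finrank K A')) : A' ⊗[K] B' →ₗ[K] B' :=
    Finsupp.lapply i ∘ₗ (equivFinsuppOfBasisLeft b').toLinearMap
  have expand (u : A' ⊗[K] B') : ∑ i, b' i ⊗ₜ coeff i u = u := by
    conv_rhs => rw [← (equivFinsuppOfBasisLeft b').symm_apply_apply u,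
      equivFinsuppOfBasisLeft_symm_apply, Finsupp.sum_fintype _ _ (by simp)]
    simp [coeff]
  have hΦ : Φ = ∑ i, ∑ j, map ((b.coord j).smulRight (b' i))
      (coeff i ∘ₗ Φ ∘ₗ TensorProduct.mk K A B (b j)) := by
    refine TensorProduct.ext' fun x y => ?_
    conv_lhs => rw [← b.sum_repr x, sum_tmul, map_sum]
    simp only [LinearMap.sum_apply, map_tmul, LinearMap.smulRight_apply, LinearMap.comp_apply,
      mk_apply, Module.Basis.coord_apply, ← smul_tmul']
    rw [Finset.sum_comm]
    refine Finset.sum_congr rfl fun j _ => ?_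
    rw [map_smul, ← Finset.smul_sum, expand]
  rw [hΦ]
  exact Submodule.sum_mem _ fun i _ => Submodule.sum_mem _ fun j _ =>
    Submodule.subset_span (Set.mem_range_self (_, _))

theorem exists_eq_sum_map_basis [Module.Finite K A] {ι : Type*} [Fintype ι]
    (e : Module.Basis ι K (A →ₗ[K] A)) (Φ : A ⊗[K] B →ₗ[K] A ⊗[K] B) :
    ∃ γ : ι → B →ₗ[K] B, Φ = ∑ i, map (e i) (γ i) := by
  let Γ : (ι → B →ₗ[K] B) →ₗ[K] (A ⊗[K] B →ₗ[K] A ⊗[K] B) :=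
    ∑ i, mapBilinear (RingHom.id K) A B A B (e i) ∘ₗ LinearMap.proj i
  have hΓ (γ : ι → B →ₗ[K] B) : Γ γ = ∑ i, map (e i) (γ i) := by simp [Γ]
  have hrange : ⊤ ≤ LinearMap.range Γ := by
    rw [← TensorProduct.span_range_map_eq_top, Submodule.span_le]
    rintro _ ⟨⟨θ, δ⟩, rfl⟩
    refine ⟨fun i => e.repr θ i • δ, ?_⟩
    simp only [hΓ, map_smul_right]
    conv_rhs => rw [← e.sum_repr θ, ← mapBilinear_apply, map_sum, LinearMap.sum_apply]
    simp
  obtain ⟨γ, hγ⟩ := hrange (Submodule.mem_top (x := Φ))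
  exact ⟨γ, hγ ▸ hΓ γ⟩

end MapDecomposition

section HomJacobiator

variable {R M : Type*} [CommSemiring R] [AddCommMonoid M] [Module R M]

def homJacobiator (Br : M →ₗ[R] M →ₗ[R] M) : (M →ₗ[R] M) →ₗ[R] (M → M → M → M) where
  toFun Φ u v w := Br (Br u v) (Φ w) + Br (Br w u) (Φ v) + Br (Br v w) (Φ u)
  map_add' Φ Ψ := by ext u v w; simp only [LinearMap.add_apply, map_add, Pi.add_apply]; abel
  map_smul' c Φ := by ext u v w; simp [smul_add]

variable (Br : M →ₗ[R] M →ₗ[R] M) (Φ : M →ₗ[R] M)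

@[simp]
theorem homJacobiator_apply (u v w : M) :
    homJacobiator Br Φ u v w = Br (Br u v) (Φ w) + Br (Br w u) (Φ v) + Br (Br v w) (Φ u) := rfl

theorem homJacobiator_rotate (u v w : M) :
    homJacobiator Br Φ u v w = homJacobiator Br Φ v w u := by
  simp only [homJacobiator_apply]
  abel

theorem homJacobiator_add_left (u u' v w : M) :
    homJacobiator Br Φ (u + u') v w = homJacobiator Br Φ u v w + homJacobiator Br Φ u' v w := by
  simp only [homJacobiator_apply, map_add, LinearMap.add_apply]
  abel

end HomJacobiator

section TensorBracket

variable {K A B : Type*} [Field K] [NonUnitalNonAssocRing A] [Module K A]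
  [NonUnitalNonAssocRing B] [Module K B]

-- By cyclic symmetry it suffices to decompose the first argument into pure tensors, three times.
theorem homJacobiator_eq_zero_of_tmul (Br : A ⊗[K] B →ₗ[K] A ⊗[K] B →ₗ[K] A ⊗[K] B)
    (Φ : A ⊗[K] B →ₗ[K] A ⊗[K] B)
    (h : ∀ (x y z : A) (a b c : B), homJacobiator Br Φ (x ⊗ₜ a) (y ⊗ₜ b) (z ⊗ₜ c) = 0) :
    homJacobiator Br Φ = 0 := by
  have left (v w : A ⊗[K] B) (hvw : ∀ x a, homJacobiator Br Φ (x ⊗ₜ a) v w = 0) (u) :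
      homJacobiator Br Φ u v w = 0 := by
    induction u using TensorProduct.induction_on with
    | zero => simp
    | tmul x a => exact hvw x a
    | add u u' hu hu' => rw [homJacobiator_add_left, hu, hu', add_zero]
  ext u v w
  refine left v w (fun x a => ?_) u
  rw [homJacobiator_rotate]
  refine left w _ (fun y b => ?_) v
  rw [homJacobiator_rotate]
  refine left _ _ (fun z c => ?_) w
  rw [homJacobiator_rotate]
  exact h x y z a b c

variable {Br : A ⊗[K] B →ₗ[K] A ⊗[K] B →ₗ[K] A ⊗[K] B}

theorem br_tmul_tmul (hcomm : ∀ x y : A, x * y = y * x) (hanti : ∀ a b : B, a * b = -(b * a))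
    (hBr : ∀ (x y : A) (a b : B), Br (x ⊗ₜ a) (y ⊗ₜ b) = (x * y) ⊗ₜ (a * b) - (y * x) ⊗ₜ (b * a))
    (x y : A) (a b : B) : Br (x ⊗ₜ a) (y ⊗ₜ b) = (2 : K) • (x * y) ⊗ₜ (a * b) := by
  rw [hBr, hcomm y x, hanti b a, tmul_neg, sub_neg_eq_add, two_smul]

theorem homJacobiator_map_tmul (hcomm : ∀ x y : A, x * y = y * x)
    (hanti : ∀ a b : B, a * b = -(b * a))
    (hBr : ∀ (x y : A) (a b : B), Br (x ⊗ₜ a) (y ⊗ₜ b) = (x * y) ⊗ₜ (a * b) - (y * x) ⊗ₜ (b * a))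
    (α : A →ₗ[K] A) (β : B →ₗ[K] B) (x y z : A) (a b c : B) :
    homJacobiator Br (map α β) (x ⊗ₜ a) (y ⊗ₜ b) (z ⊗ₜ c) =
      (4 : K) • homLieTensor α β (x, y, z) (a, b, c) := by
  simp only [homJacobiator_apply, map_tmul, br_tmul_tmul hcomm hanti hBr, map_smul,
    LinearMap.smul_apply, smul_smul, homLieTensor, smul_add]
  norm_num

end TensorBracket

section Classification

variable {K A B : Type*} [Field K]
  [NonUnitalNonAssocRing A] [Module K A] [SMulCommClass K A A]
  [NonUnitalNonAssocRing B] [Module K B] [SMulCommClass K B B]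

theorem sum_map_mem_span_of_sum_homLieTensor_eq_zero (h3 : (3 : K) ≠ 0)
    (hcomm : ∀ x y : A, x * y = y * x) {ι : Type*} [Fintype ι]
    (e : Module.Basis ι K (A →ₗ[K] A)) {sL sC : Set ι}
    (hL : LinearMap.ker (homLieForm K A) = Submodule.span K (e '' sL))
    (hC : LinearMap.ker (homCyclicForm K A) = Submodule.span K (e '' sC))
    (γ : ι → B →ₗ[K] B) (h : ∀ p q, ∑ i, homLieTensor (e i) (γ i) p q = 0) :
    ∑ i, map (e i) (γ i) ∈
      Submodule.span K {P | ∃ α β, P = map α β ∧ IsHomLiePair α β} := by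
  have hγL (i) (hi : i ∉ sL) : IsHomLie (γ i) := by
    refine mem_ker_homLieForm.1 (LinearMap.mem_ker.2 ?_)
    refine eq_zero_of_sum_tmul_eq_zero_of_ker_eq e.linearIndependent hL
      (Q := fun i => homLieForm K B (γ i)) (fun ⟨x, y, z⟩ ⟨a, b, c⟩ => ?_) hi
    simp only [homLieForm_tmul_homLieForm, Finset.sum_add_distrib, h, add_zero]
  have hγC (i) (hi : i ∉ sC) : IsHomCyclic (γ i) := by
    refine mem_ker_homCyclicForm.1 (LinearMap.mem_ker.2 ?_)
    refine eq_zero_of_sum_tmul_eq_zero_of_ker_eq e.linearIndependent hC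
      (Q := fun i => homCyclicForm K B (γ i)) (fun ⟨x, y, z⟩ ⟨a, b, c⟩ => ?_) hi
    simp only [homCyclicForm_tmul_homCyclicForm hcomm, Finset.sum_sub_distrib, h, sub_zero]
  have heL (i) (hi : i ∈ sL) : IsHomLie (e i) :=
    mem_ker_homLieForm.1 (hL ▸ Submodule.subset_span (Set.mem_image_of_mem e hi))
  have heC (i) (hi : i ∈ sC) : IsHomCyclic (e i) :=
    mem_ker_homCyclicForm.1 (hC ▸ Submodule.subset_span (Set.mem_image_of_mem e hi))
  refine Submodule.sum_mem _ fun i _ => Submodule.subset_span ⟨e i, γ i, rfl, ?_⟩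
  by_cases hiL : i ∈ sL <;> by_cases hiC : i ∈ sC
  · exact Or.inr (Or.inl ((heL i hiL).isHom2Nilpotent h3 (heC i hiC)))
  · exact Or.inl ⟨heL i hiL, hγC i hiC⟩
  · exact Or.inr (Or.inr (Or.inl ⟨heC i hiC, hγL i hiL⟩))
  · exact Or.inr (Or.inr (Or.inr ((hγL i hiL).isHom2Nilpotent h3 (hγC i hiC))))

theorem ker_homJacobiator_eq_span [Module.Finite K A] (h2 : (2 : K) ≠ 0) (h3 : (3 : K) ≠ 0)
    (hcomm : ∀ x y : A, x * y = y * x) (hanti : ∀ a b : B, a * b = -(b * a))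
    {Br : A ⊗[K] B →ₗ[K] A ⊗[K] B →ₗ[K] A ⊗[K] B}
    (hBr : ∀ (x y : A) (a b : B),
      Br (x ⊗ₜ a) (y ⊗ₜ b) = (x * y) ⊗ₜ (a * b) - (y * x) ⊗ₜ (b * a)) :
    LinearMap.ker (homJacobiator Br) =
      Submodule.span K {P | ∃ α β, P = map α β ∧ IsHomLiePair α β} := by
  refine le_antisymm (fun Φ hΦ => ?_) (Submodule.span_le.2 ?_)
  · obtain ⟨ι, e, sL, sC, hL, hC⟩ :=
      exists_basis_span_image_eq_of_two (LinearMap.ker (homLieForm K A))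
        (LinearMap.ker (homCyclicForm K A))
    have : Fintype ι := @Fintype.ofFinite ι (Module.Finite.finite_basis e)
    obtain ⟨γ, rfl⟩ := exists_eq_sum_map_basis e Φ
    refine sum_map_mem_span_of_sum_homLieTensor_eq_zero h3 hcomm e hL.symm hC.symm γ
      fun ⟨x, y, z⟩ ⟨a, b, c⟩ => ?_
    have h4 : (4 : K) ≠ 0 := by
      rw [show (4 : K) = 2 * 2 by norm_num]
      exact mul_ne_zero h2 h2
    have hΦ' := congrFun₃ (LinearMap.mem_ker.1 hΦ) (x ⊗ₜ a) (y ⊗ₜ b) (z ⊗ₜ c)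
    simp only [map_sum, Finset.sum_apply, homJacobiator_map_tmul hcomm hanti hBr,
      ← Finset.smul_sum, Pi.zero_apply] at hΦ'
    exact (smul_eq_zero.1 hΦ').resolve_left h4
  · rintro _ ⟨α, β, rfl, hαβ⟩
    refine homJacobiator_eq_zero_of_tmul Br _ fun x y z a b c => ?_
    rw [homJacobiator_map_tmul hcomm hanti hBr, hαβ.homLieTensor_eq_zero, smul_zero]

end Classification

theorem homLie_tensor_operadic_general (K A B : Type*) [Field K]
    [NonUnitalNonAssocRing A] [Module K A] [SMulCommClass K A A]
    [NonUnitalNonAssocRing B] [Module K B] [SMulCommClass K B B]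
    [Module.Finite K A]
    (h2 : (2 : K) ≠ 0) (h3 : (3 : K) ≠ 0)
    (hcomm : ∀ x y : A, x * y = y * x)
    (hanti : ∀ a b : B, a * b = -(b * a))
    (Br : (A ⊗[K] B) →ₗ[K] (A ⊗[K] B) →ₗ[K] (A ⊗[K] B))
    (hBr : ∀ (x y : A) (a b : B),
      Br (x ⊗ₜ a) (y ⊗ₜ b) = (x * y) ⊗ₜ (a * b) - (y * x) ⊗ₜ (b * a))
    (Φ : A ⊗[K] B →ₗ[K] A ⊗[K] B) :
    (∀ u v w : A ⊗[K] B,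
        Br (Br u v) (Φ w) + Br (Br w u) (Φ v) + Br (Br v w) (Φ u) = 0) ↔
      Φ ∈ Submodule.span K
        { P : A ⊗[K] B →ₗ[K] A ⊗[K] B |
          ∃ (α : A →ₗ[K] A) (β : B →ₗ[K] B), P = TensorProduct.map α β ∧
            ((IsHomLie α ∧ IsHomCyclic β) ∨ IsHom2Nilpotent α ∨
              (IsHomCyclic α ∧ IsHomLie β) ∨ IsHom2Nilpotent β) } := by
  change _ ↔ Φ ∈ Submodule.span K {P | ∃ α β, P = map α β ∧ IsHomLiePair α β}
  rw [← ker_homJacobiator_eq_span h2 h3 hcomm hanti hBr, LinearMap.mem_ker]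
  simp only [funext_iff, homJacobiator_apply, Pi.zero_apply]

/-- Hom-Lie structures on the Lie algebra `(A ⊗ B)⁽⁻⁾`, where `A` is a
finite-dimensional commutative algebra and `B` an anticommutative algebra over a field of
characteristic `≠ 2, 3`, are exactly the linear span of tensor products `α ⊗ β` with
(`α` Hom-Lie, `β` Hom-cyclic), (`α` Hom-2-nilpotent, `β` arbitrary),
(`α` Hom-cyclic, `β` Hom-Lie), or (`α` arbitrary, `β` Hom-2-nilpotent). -/
theorem homLie_tensor_operadic (K A B : Type*) [Field K]
    [NonUnitalNonAssocRing A] [Module K A] [SMulCommClass K A A] [IsScalarTower K A A]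
    [NonUnitalNonAssocRing B] [Module K B] [SMulCommClass K B B] [IsScalarTower K B B]
    [Module.Finite K A]
    (h2 : (2 : K) ≠ 0) (h3 : (3 : K) ≠ 0)
    (hcomm : ∀ x y : A, x * y = y * x)
    (hanti : ∀ a b : B, a * b = -(b * a))
    (Br : (A ⊗[K] B) →ₗ[K] (A ⊗[K] B) →ₗ[K] (A ⊗[K] B))
    (hBr : ∀ (x y : A) (a b : B),
      Br (x ⊗ₜ a) (y ⊗ₜ b) = (x * y) ⊗ₜ (a * b) - (y * x) ⊗ₜ (b * a))
    (Φ : A ⊗[K] B →ₗ[K] A ⊗[K] B) :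
    (∀ u v w : A ⊗[K] B,
        Br (Br u v) (Φ w) + Br (Br w u) (Φ v) + Br (Br v w) (Φ u) = 0) ↔
      Φ ∈ Submodule.span K
        { P : A ⊗[K] B →ₗ[K] A ⊗[K] B |
          ∃ (α : A →ₗ[K] A) (β : B →ₗ[K] B), P = TensorProduct.map α β ∧
            ((IsHomLie α ∧ IsHomCyclic β) ∨ IsHom2Nilpotent α ∨
              (IsHomCyclic α ∧ IsHomLie β) ∨ IsHom2Nilpotent β) } :=
  homLie_tensor_operadic_general K A B h2 h3 hcomm hanti Br hBr Φ
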